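/- Let z be a point of the open unit disk and let θ, θ′ ∈ ℝ with 0 < θ′ − θ ≤ 2π. Let ψ, ψ′ ∈ ℝ be such that e^{iψ} = A_z(θ), e^{iψ′} = A_z(θ′), and 0 < ψ′ − ψ ≤ 2π. Then ∫_θ^{θ′} P(z,t) dt = (ψ′ − ψ)/(2π). -/

import Mathlib

/-- The Poisson kernel of the unit disk:
`P(z,θ) = (1/(2π)) · (1 − |z|²)/|z − e^{iθ}|²`. -/
noncomputable def poisson (z : ℂ) (θ : ℝ) : ℝ :=
  (1 / (2 * Real.pi)) * (1 - ‖z‖ ^ 2) /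
    ‖z - Complex.exp (θ * Complex.I)‖ ^ 2

/-- The antipode of `e^{iθ}` relative to a point `z` of the open unit disk:
`A_z(θ) = −(e^{iθ} − z)·e^{−iθ}/conj(e^{iθ} − z)`; it is the second intersection of the
line through `z` and `e^{iθ}` with the unit circle. -/
noncomputable def antipode (z : ℂ) (θ : ℝ) : ℂ :=
  -(Complex.exp (θ * Complex.I) - z) * Complex.exp (-θ * Complex.I) /
    (starRingEnd ℂ) (Complex.exp (θ * Complex.I) - z)
/-! For `‖z‖ < 1` the point `1 - z e^{-it}` stays in the right half-plane, so
`G(t) = π + t + 2 arg (1 - z e^{-it})` is a smooth argument of `A_z(t)`.  Its derivative is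
`2π P(z,t)` and `G(t + 2π) = G(t) + 2π`, so `∫_θ^{θ'} P(z,t) dt = (G θ' - G θ)/2π` with
`G θ' - G θ ∈ (0, 2π]`.  Both `ψ' - ψ` and `G θ' - G θ` are arguments of `A_z(θ')/A_z(θ)`
lying in `(0, 2π]`, hence they are equal. -/

open Complex ComplexConjugate
open scoped Real

lemma Complex.re_add_div_sub (ζ z : ℂ) :
    ((ζ + z) / (ζ - z)).re = (‖ζ‖ ^ 2 - ‖z‖ ^ 2) / ‖ζ - z‖ ^ 2 := by
  simp only [div_re, ← normSq_eq_norm_sq, normSq_apply, add_re, sub_re, add_im, sub_im]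
  ring

lemma two_pi_mul_poisson (z : ℂ) (t : ℝ) :
    2 * π * poisson z t = ((exp (t * I) + z) / (exp (t * I) - z)).re := by
  rw [re_add_div_sub, norm_exp_ofReal_mul_I, poisson, norm_sub_rev]
  field_simp [Real.pi_pos.ne']

lemma sub_exp_mul_I_ne_zero {z : ℂ} (hz : ‖z‖ < 1) (t : ℝ) : z - exp (t * I) ≠ 0 := by
  rw [sub_ne_zero]
  rintro rfl
  simp at hz

lemma poisson_pos {z : ℂ} (hz : ‖z‖ < 1) (t : ℝ) : 0 < poisson z t := by
  have hne := sub_exp_mul_I_ne_zero hz t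
  have hpi := Real.pi_pos
  have hnum : 0 < 1 - ‖z‖ ^ 2 := by nlinarith [norm_nonneg z]
  unfold poisson
  positivity

lemma continuous_poisson {z : ℂ} (hz : ‖z‖ < 1) : Continuous (poisson z) :=
  continuous_const.div (by fun_prop) fun t ↦ by simpa using sub_exp_mul_I_ne_zero hz t

lemma HasDerivAt.arg_real {f : ℝ → ℂ} {f' : ℂ} {x : ℝ} (hf : HasDerivAt f f' x)
    (hx : f x ∈ slitPlane) : HasDerivAt (fun t ↦ arg (f t)) (f' / f x).im x := by
  simpa [Function.comp_def, log_im] using imCLM.hasFDerivAt.comp_hasDerivAt x (hf.clog_real hx)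

lemma Complex.exp_two_mul_arg_mul_I {u : ℂ} (hu : u ≠ 0) :
    exp (2 * arg u * I) = u / conj u := by
  have h := norm_mul_exp_arg_mul_I u
  have hc : conj u = ‖u‖ * exp (-(arg u * I)) := by
    conv_lhs => rw [← h]
    rw [map_mul, conj_ofReal, ← exp_conj, map_mul, conj_ofReal, conj_I, mul_neg]
  rw [eq_div_iff ((map_ne_zero _).mpr hu), hc, mul_left_comm, ← exp_add]
  conv_rhs => rw [← h]
  ring_nf

lemma one_sub_mul_exp_mem_slitPlane {z : ℂ} (hz : ‖z‖ < 1) (t : ℝ) :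
    1 - z * exp (-t * I) ∈ slitPlane := by
  rw [sub_eq_add_neg]
  apply mem_slitPlane_of_norm_lt_one
  rwa [norm_neg, norm_mul, ← ofReal_neg, norm_exp_ofReal_mul_I, mul_one]

noncomputable def antipodeAngle (z : ℂ) (t : ℝ) : ℝ :=
  π + t + 2 * arg (1 - z * exp (-t * I))

lemma antipodeAngle_add_two_pi (z : ℂ) (t : ℝ) :
    antipodeAngle z (t + 2 * π) = antipodeAngle z t + 2 * π := by
  have : exp (-↑(t + 2 * π) * I) = exp (-t * I) := by
    rw [show -↑(t + 2 * π) * I = -t * I - 2 * π * I by push_cast; ring, exp_periodic.sub_eq]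
  rw [antipodeAngle, antipodeAngle, this]
  ring

lemma exp_antipodeAngle_mul_I {z : ℂ} (hz : ‖z‖ < 1) (t : ℝ) :
    exp (antipodeAngle z t * I) = antipode z t := by
  set u := 1 - z * exp (-t * I) with hu_def
  have hu : u ≠ 0 := slitPlane_ne_zero (one_sub_mul_exp_mem_slitPlane hz t)
  have hinv : exp (-t * I) = (exp (t * I))⁻¹ := by rw [neg_mul, exp_neg]
  have hsub : exp (t * I) - z = exp (t * I) * u := by
    rw [hu_def, hinv]
    field_simp
  have hconj : conj (exp (t * I)) = exp (-t * I) := by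
    rw [← exp_conj]
    simp
  have hsplit :
      exp (antipodeAngle z t * I) = exp (π * I) * exp (t * I) * exp (2 * arg u * I) := by
    rw [← exp_add, ← exp_add, antipodeAngle, ← hu_def]
    push_cast
    ring_nf
  rw [hsplit, exp_pi_mul_I, exp_two_mul_arg_mul_I hu, antipode, hsub, map_mul, hconj, hinv]
  field_simp

lemma hasDerivAt_antipodeAngle {z : ℂ} (hz : ‖z‖ < 1) (t : ℝ) :
    HasDerivAt (antipodeAngle z) (2 * π * poisson z t) t := by
  set w := z * exp (-t * I)
  have hu : HasDerivAt (fun s : ℝ ↦ 1 - z * exp (-s * I)) (I * w) t := by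
    have hlin : HasDerivAt (fun s : ℝ ↦ -(s : ℂ) * I) (-I) t := by
      simpa using (hasDerivAt_id t).ofReal_comp.neg.mul_const I
    exact ((hlin.cexp.const_mul z).const_sub 1).congr_deriv (by ring)
  have hG : HasDerivAt (antipodeAngle z) (1 + 2 * (I * w / (1 - w)).im) t :=
    ((hasDerivAt_id t).const_add π).add
      ((hu.arg_real (one_sub_mul_exp_mem_slitPlane hz t)).const_mul 2)
  refine hG.congr_deriv ?_
  have hw : 1 - w ≠ 0 := slitPlane_ne_zero (one_sub_mul_exp_mem_slitPlane hz t)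
  have hplus : exp (t * I) + z = exp (t * I) * (1 + w) := by
    simp only [w, neg_mul, exp_neg]
    field_simp
  have hminus : exp (t * I) - z = exp (t * I) * (1 - w) := by
    simp only [w, neg_mul, exp_neg]
    field_simp
  have key : (exp (t * I) + z) / (exp (t * I) - z) = 1 + 2 * (-I * (I * w / (1 - w))) := by
    rw [hplus, hminus, mul_div_mul_left _ _ (exp_ne_zero _)]
    field_simp
    linear_combination 2 * w * I_sq
  rw [two_pi_mul_poisson, key]
  simp

lemma integral_poisson {z : ℂ} (hz : ‖z‖ < 1) (a b : ℝ) :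
    ∫ t in a..b, poisson z t = (antipodeAngle z b - antipodeAngle z a) / (2 * π) := by
  rw [eq_div_iff Real.two_pi_pos.ne', mul_comm, ← intervalIntegral.integral_const_mul,
    intervalIntegral.integral_eq_sub_of_hasDerivAt (fun t _ ↦ hasDerivAt_antipodeAngle hz t)]
  exact ((continuous_const.mul (continuous_poisson hz)).intervalIntegrable a b)

lemma strictMono_antipodeAngle {z : ℂ} (hz : ‖z‖ < 1) : StrictMono (antipodeAngle z) :=
  strictMono_of_hasDerivAt_pos (hasDerivAt_antipodeAngle hz)
    fun t ↦ mul_pos Real.two_pi_pos (poisson_pos hz t)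

lemma eq_of_exp_mul_I_eq {x y : ℝ} (hx : x ∈ Set.Ioc 0 (2 * π)) (hy : y ∈ Set.Ioc 0 (2 * π))
    (h : exp (x * I) = exp (y * I)) : x = y :=
  Circle.exp_injOn_Ioc (by simp) hx hy (Circle.ext (by simpa only [Circle.coe_exp] using h))

/-- **Harmonic measure via antipodes.**  Let `z` be in the open unit disk and
`θ, θ′ ∈ ℝ` with `0 < θ′ − θ ≤ 2π`.  If `ψ, ψ′ ∈ ℝ` satisfy `e^{iψ} = A_z(θ)`,
`e^{iψ′} = A_z(θ′)` and `0 < ψ′ − ψ ≤ 2π`, then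
`∫_θ^{θ′} P(z,t) dt = (ψ′ − ψ)/(2π)`. -/
theorem harmonic_measure_antipode
    (z : ℂ) (hz : ‖z‖ < 1) (θ θ' : ℝ)
    (hθ : 0 < θ' - θ) (hθ2 : θ' - θ ≤ 2 * Real.pi)
    (ψ ψ' : ℝ)
    (hψ : Complex.exp (ψ * Complex.I) = antipode z θ)
    (hψ' : Complex.exp (ψ' * Complex.I) = antipode z θ')
    (hψord : 0 < ψ' - ψ) (hψord2 : ψ' - ψ ≤ 2 * Real.pi) :
    ∫ t in θ..θ', poisson z t = (ψ' - ψ) / (2 * Real.pi) := by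
  set G := antipodeAngle z
  have hlt : G θ < G θ' := strictMono_antipodeAngle hz (by linarith)
  have hle : G θ' ≤ G θ + 2 * π := by
    rw [← antipodeAngle_add_two_pi]
    exact (strictMono_antipodeAngle hz).monotone (by linarith)
  have hexp : exp (↑(ψ' - ψ) * I) = exp (↑(G θ' - G θ) * I) := by
    simp only [ofReal_sub, sub_mul, exp_sub, hψ, hψ', G, exp_antipodeAngle_mul_I hz]
  rw [integral_poisson hz, eq_of_exp_mul_I_eq ⟨hψord, hψord2⟩ ⟨by linarith, by linarith⟩ hexp]
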